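/- arXiv:0911.3441 — 5 statements merged into one kernel-verified Lean document; each statement's English description precedes it below -/
import Mathlib

section
/- Let T be a finite rooted tree with vertex set V, root ρ, and arc set A (arcs directed away from the root). Consider a two-state Markov process on T with root distribution π on {0,1} and a 2×2 transition matrix P(r,s) for each arc (r,s), where each P(r,s) has non-negative entries and det P(r,s) ≥ 0. Define, for a state assignment U : V → {0,1}, P(U) = π(U(ρ)) · ∏_{(r,s)∈A} P(r,s)(U(r), U(s)). Then for any two assignments Y, Z : V → {0,1}, P(Y)·P(Z) ≤ P(Y ∨ Z)·P(Y ∧ Z), where ∨ and ∧ denote pointwise max and min. -/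
/-!
Each factor of `P(U)` depends on `U` only through a lattice homomorphism (evaluation at the
root, or at the two ends of an arc), and each is log-supermodular: the root factor trivially
(on a chain `{max, min} = {a, b}`), an arc factor because for a `2 × 2` matrix,
log-supermodularity in (row, column) is exactly `det ≥ 0`. Products of non-negative
log-supermodular functions are log-supermodular.
-/

open Finset

def IsLogSupermodular {α : Type*} [Lattice α] (f : α → ℝ) : Prop :=
  ∀ x y, f x * f y ≤ f (x ⊔ y) * f (x ⊓ y)

namespace IsLogSupermodular

variable {α β : Type*} [Lattice α] [Lattice β]

theorem of_linearOrder {γ : Type*} [LinearOrder γ] (f : γ → ℝ) : IsLogSupermodular f :=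
  fun x y ↦ (fn_max_mul_fn_min f x y).ge

theorem comp {f : α → ℝ} (hf : IsLogSupermodular f) (φ : LatticeHom β α) :
    IsLogSupermodular (f ∘ φ) := by
  intro x y
  simpa only [Function.comp_apply, map_sup, map_inf] using hf (φ x) (φ y)

theorem mul {f g : α → ℝ} (hf : IsLogSupermodular f) (hg : IsLogSupermodular g)
    (hf₀ : 0 ≤ f) (hg₀ : 0 ≤ g) : IsLogSupermodular (f * g) := by
  intro x y
  calc (f * g) x * (f * g) y = (f x * f y) * (g x * g y) := by simp only [Pi.mul_apply]; ring
    _ ≤ (f (x ⊔ y) * f (x ⊓ y)) * (g (x ⊔ y) * g (x ⊓ y)) :=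
      mul_le_mul (hf x y) (hg x y) (mul_nonneg (hg₀ x) (hg₀ y))
        (mul_nonneg (hf₀ _) (hf₀ _))
    _ = (f * g) (x ⊔ y) * (f * g) (x ⊓ y) := by simp only [Pi.mul_apply]; ring

theorem prod {ι : Type*} (s : Finset ι) (f : ι → α → ℝ)
    (hf : ∀ i ∈ s, IsLogSupermodular (f i)) (hf₀ : ∀ i ∈ s, 0 ≤ f i) :
    IsLogSupermodular (∏ i ∈ s, f i) := by
  refine (prod_induction f (fun g ↦ IsLogSupermodular g ∧ 0 ≤ g) ?_ ?_
    fun i hi ↦ ⟨hf i hi, hf₀ i hi⟩).1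
  · rintro g h ⟨hg, hg₀⟩ ⟨hh, hh₀⟩
    exact ⟨hg.mul hh hg₀ hh₀, mul_nonneg hg₀ hh₀⟩
  · exact ⟨fun x y ↦ by simp, zero_le_one⟩

end IsLogSupermodular

def Pi.evalPairLatticeHom {ι α : Type*} [Lattice α] (u v : ι) : LatticeHom (ι → α) (α × α) where
  toFun U := (U u, U v)
  map_sup' _ _ := rfl
  map_inf' _ _ := rfl

theorem Matrix.isLogSupermodular_of_det_nonneg (M : Matrix (Fin 2) (Fin 2) ℝ)
    (hdet : 0 ≤ M.det) :
    IsLogSupermodular fun p : Fin 2 × Fin 2 ↦ M p.1 p.2 := by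
  rintro ⟨a, c⟩ ⟨b, d⟩
  rw [Matrix.det_fin_two] at hdet
  -- The two sides agree unless `(a, c)` and `(b, d)` are the two off-diagonal positions,
  -- where the inequality reads `det M ≥ 0`.
  fin_cases a <;> fin_cases b <;> fin_cases c <;> fin_cases d <;>
    simp <;> linarith

theorem stmt_5_general {V : Type} (ρ : V) (A : Finset (V × V))
    -- root distribution
    (π : Fin 2 → ℝ) (hπ : ∀ i, 0 ≤ π i)
    -- transition matrices on arcs
    (P : V → V → Matrix (Fin 2) (Fin 2) ℝ)
    (hP : ∀ a ∈ A, ∀ i j, 0 ≤ P a.1 a.2 i j)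
    (hPdet : ∀ a ∈ A, 0 ≤ (P a.1 a.2).det)
    (Y Z : V → Fin 2) :
    (π (Y ρ) * ∏ a ∈ A, P a.1 a.2 (Y a.1) (Y a.2)) *
      (π (Z ρ) * ∏ a ∈ A, P a.1 a.2 (Z a.1) (Z a.2)) ≤
    (π (max (Y ρ) (Z ρ)) * ∏ a ∈ A, P a.1 a.2 (max (Y a.1) (Z a.1)) (max (Y a.2) (Z a.2))) *
      (π (min (Y ρ) (Z ρ)) * ∏ a ∈ A, P a.1 a.2 (min (Y a.1) (Z a.1)) (min (Y a.2) (Z a.2))) := by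
  let root : (V → Fin 2) → ℝ := fun U ↦ π (U ρ)
  let arc : V × V → (V → Fin 2) → ℝ := fun a U ↦ P a.1 a.2 (U a.1) (U a.2)
  have hroot : IsLogSupermodular root :=
    (IsLogSupermodular.of_linearOrder π).comp (Pi.evalLatticeHom (α := fun _ ↦ Fin 2) ρ)
  have harc : ∀ a ∈ A, IsLogSupermodular (arc a) := fun a ha ↦
    ((P a.1 a.2).isLogSupermodular_of_det_nonneg (hPdet a ha)).comp
      (Pi.evalPairLatticeHom a.1 a.2)
  have harc₀ : ∀ a ∈ A, 0 ≤ arc a := fun a ha U ↦ hP a ha _ _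
  have h := hroot.mul (.prod A arc harc harc₀) (fun U ↦ hπ _) (prod_nonneg harc₀) Y Z
  simp only [Pi.mul_apply, prod_apply] at h
  exact h

/-- Log-supermodularity of the probability of a full state assignment for a two-state
Markov process on a rooted tree whose transition matrices have non-negative determinant. -/
theorem stmt_5 {V : Type} [Fintype V] (ρ : V) (A : Finset (V × V))
    -- tree structure: arcs directed away from the root
    (hroot : ∀ a ∈ A, a.2 ≠ ρ)
    (hparent : ∀ v : V, v ≠ ρ → ∃! r : V, (r, v) ∈ A)
    -- root distribution
    (π : Fin 2 → ℝ) (hπ : ∀ i, 0 ≤ π i) (hπ1 : π 0 + π 1 = 1)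
    -- transition matrices on arcs
    (P : V → V → Matrix (Fin 2) (Fin 2) ℝ)
    (hP : ∀ a ∈ A, ∀ i j, 0 ≤ P a.1 a.2 i j)
    (hProw : ∀ a ∈ A, ∀ i : Fin 2, P a.1 a.2 i 0 + P a.1 a.2 i 1 = 1)
    (hPdet : ∀ a ∈ A, 0 ≤ (P a.1 a.2).det)
    (Y Z : V → Fin 2) :
    (π (Y ρ) * ∏ a ∈ A, P a.1 a.2 (Y a.1) (Y a.2)) *
      (π (Z ρ) * ∏ a ∈ A, P a.1 a.2 (Z a.1) (Z a.2)) ≤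
    (π (max (Y ρ) (Z ρ)) * ∏ a ∈ A, P a.1 a.2 (max (Y a.1) (Z a.1)) (max (Y a.2) (Z a.2))) *
      (π (min (Y ρ) (Z ρ)) * ∏ a ∈ A, P a.1 a.2 (min (Y a.1) (Z a.1)) (min (Y a.2) (Z a.2))) :=
  stmt_5_general ρ A π hπ P hP hPdet Y Z
end

section
/- Let T be a finite rooted tree with vertex set V, root ρ, arc set A. For j = 1,...,k let π^(j) be a distribution on {0,1} and P^(j)(r,s) a 2×2 matrix with non-negative entries and det P^(j)(r,s) ≥ 0 for each arc. Define for U : V → {0,1}^k, P(U) = ∏_j [ π^(j)(U_j(ρ)) · ∏_{(r,s)∈A} P^(j)(r,s)(U_j(r), U_j(s)) ]. Then P(Y)·P(Z) ≤ P(Y∨Z)·P(Y∧Z) for all Y, Z : V → {0,1}^k, with join and meet taken coordinatewise. -/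
/-!
Each of the `k` independent factors of `multiProb` is a product of one root weight and one
transition weight per arc, and a product of non-negative functions satisfying
`f y * f z ≤ f (y ⊔ z) * f (y ⊓ z)` satisfies it again. At the root this is an equality, since
`{max y z, min y z} = {y, z}`. For an arc it is an equality except in the anti-diagonal cases,
where it reads `M 0 1 * M 1 0 ≤ M 0 0 * M 1 1`, i.e. `0 ≤ det M`.
-/

/-- The probability of a full state assignment `U : V → {0,1}^k` under the multivariate
Markov process built from `k` independent two-state Markov processes on a rooted tree. -/
noncomputable def multiProb {V : Type} [Fintype V] (ρ : V) (A : Finset (V × V)) (k : ℕ)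
    (π : Fin k → Fin 2 → ℝ) (P : Fin k → V → V → Matrix (Fin 2) (Fin 2) ℝ)
    (U : V → Fin k → Fin 2) : ℝ :=
  ∏ j, (π j (U ρ j) * ∏ a ∈ A, P j a.1 a.2 (U a.1 j) (U a.2 j))

theorem Finset.prod_mul_prod_le_prod_mul_prod {ι R : Type*} [CommSemiring R] [PartialOrder R]
    [IsOrderedRing R] (s : Finset ι) {f g f' g' : ι → R} (h0 : ∀ i ∈ s, 0 ≤ f i * g i)
    (h : ∀ i ∈ s, f i * g i ≤ f' i * g' i) :
    (∏ i ∈ s, f i) * (∏ i ∈ s, g i) ≤ (∏ i ∈ s, f' i) * (∏ i ∈ s, g' i) := by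
  rw [← Finset.prod_mul_distrib, ← Finset.prod_mul_distrib]
  exact Finset.prod_le_prod h0 h

theorem apply_max_mul_apply_min {α M : Type*} [LinearOrder α] [CommMagma M] (f : α → M)
    (a b : α) : f (max a b) * f (min a b) = f a * f b := by
  rcases le_total a b with h | h
  · rw [max_eq_right h, min_eq_left h, mul_comm]
  · rw [max_eq_left h, min_eq_right h]

theorem Matrix.fin_two_mul_le_max_mul_min {R : Type*} [CommRing R] [LinearOrder R]
    [IsStrictOrderedRing R] (M : Matrix (Fin 2) (Fin 2) R) (hdet : 0 ≤ M.det) (a b c d : Fin 2) :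
    M a b * M c d ≤ M (max a c) (max b d) * M (min a c) (min b d) := by
  rw [Matrix.det_fin_two] at hdet
  fin_cases a <;> fin_cases b <;> fin_cases c <;> fin_cases d <;>
    simp <;> linarith

theorem markov_tree_weight_mul_le {V : Type*} (ρ : V) (A : Finset (V × V)) (π : Fin 2 → ℝ)
    (P : V → V → Matrix (Fin 2) (Fin 2) ℝ) (hπ : ∀ i, 0 ≤ π i)
    (hP : ∀ a ∈ A, ∀ i l, 0 ≤ P a.1 a.2 i l) (hPdet : ∀ a ∈ A, 0 ≤ (P a.1 a.2).det)
    (y z : V → Fin 2) :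
    (π (y ρ) * ∏ a ∈ A, P a.1 a.2 (y a.1) (y a.2)) *
        (π (z ρ) * ∏ a ∈ A, P a.1 a.2 (z a.1) (z a.2)) ≤
      (π (max (y ρ) (z ρ)) * ∏ a ∈ A, P a.1 a.2 (max (y a.1) (z a.1)) (max (y a.2) (z a.2))) *
        (π (min (y ρ) (z ρ)) * ∏ a ∈ A, P a.1 a.2 (min (y a.1) (z a.1)) (min (y a.2) (z a.2))) := by
  rw [mul_mul_mul_comm, mul_mul_mul_comm (π (max _ _)), apply_max_mul_apply_min]
  refine mul_le_mul_of_nonneg_left ?_ (mul_nonneg (hπ _) (hπ _))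
  exact Finset.prod_mul_prod_le_prod_mul_prod A
    (fun a ha => mul_nonneg (hP a ha _ _) (hP a ha _ _))
    (fun a ha => Matrix.fin_two_mul_le_max_mul_min _ (hPdet a ha) _ _ _ _)

theorem stmt_6_general {V : Type} [Fintype V] (ρ : V) (A : Finset (V × V))
    (k : ℕ) (π : Fin k → Fin 2 → ℝ)
    (hπ : ∀ j i, 0 ≤ π j i)
    (P : Fin k → V → V → Matrix (Fin 2) (Fin 2) ℝ)
    (hP : ∀ j, ∀ a ∈ A, ∀ i l, 0 ≤ P j a.1 a.2 i l)
    (hPdet : ∀ j, ∀ a ∈ A, 0 ≤ (P j a.1 a.2).det)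
    (Y Z : V → Fin k → Fin 2) :
    multiProb ρ A k π P Y * multiProb ρ A k π P Z ≤
      multiProb ρ A k π P (fun v j => max (Y v j) (Z v j)) *
        multiProb ρ A k π P (fun v j => min (Y v j) (Z v j)) := by
  have hweight_nonneg : ∀ j (U : V → Fin k → Fin 2),
      0 ≤ π j (U ρ j) * ∏ a ∈ A, P j a.1 a.2 (U a.1 j) (U a.2 j) := fun j U =>
    mul_nonneg (hπ j _) (Finset.prod_nonneg fun a ha => hP j a ha _ _)
  exact Finset.prod_mul_prod_le_prod_mul_prod Finset.univ
    (fun j _ => mul_nonneg (hweight_nonneg j Y) (hweight_nonneg j Z))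
    (fun j _ => markov_tree_weight_mul_le ρ A (π j) (P j) (hπ j) (hP j) (hPdet j)
      (fun v => Y v j) (fun v => Z v j))

theorem stmt_6 {V : Type} [Fintype V] (ρ : V) (A : Finset (V × V))
    (hroot : ∀ a ∈ A, a.2 ≠ ρ)
    (hparent : ∀ v : V, v ≠ ρ → ∃! r : V, (r, v) ∈ A)
    (k : ℕ) (π : Fin k → Fin 2 → ℝ)
    (hπ : ∀ j i, 0 ≤ π j i) (hπ1 : ∀ j, π j 0 + π j 1 = 1)
    (P : Fin k → V → V → Matrix (Fin 2) (Fin 2) ℝ)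
    (hP : ∀ j, ∀ a ∈ A, ∀ i l, 0 ≤ P j a.1 a.2 i l)
    (hProw : ∀ j, ∀ a ∈ A, ∀ i : Fin 2, P j a.1 a.2 i 0 + P j a.1 a.2 i 1 = 1)
    (hPdet : ∀ j, ∀ a ∈ A, 0 ≤ (P j a.1 a.2).det)
    (Y Z : V → Fin k → Fin 2) :
    multiProb ρ A k π P Y * multiProb ρ A k π P Z ≤
      multiProb ρ A k π P (fun v j => max (Y v j) (Z v j)) *
        multiProb ρ A k π P (fun v j => min (Y v j) (Z v j)) :=
  stmt_6_general ρ A k π hπ P hP hPdet Y Z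
end

section
/- (Multivariate FKG inequality) Let L be a finite distributive lattice, μ a probability measure on L satisfying μ(A)μ(B) ≤ μ(A∨B)μ(A∧B) for all A, B ∈ L, and let f_1,...,f_n : L → ℝ≥0 each be decreasing (A ≤ B implies f_i(A) ≥ f_i(B)). Then ∏_{i=1}^n (∑_{A∈L} μ(A) f_i(A)) ≤ ∑_{A∈L} μ(A) ∏_{i=1}^n f_i(A). -/
/-!
Induction on the number of functions. A product of non-negative decreasing functions is again
non-negative and decreasing, so the two-function FKG inequality splits off one factor at a time;
the normalisation `∑ μ = 1` removes the factor `∑ μ` it produces.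
-/

open Finset

variable {α β : Type*} [DistribLattice α] [Fintype α] [CommSemiring β] [LinearOrder β]
  [IsStrictOrderedRing β] [ExistsAddOfLE β]

lemma fkg_of_antitone {μ f g : α → β} (hμ₀ : 0 ≤ μ) (hf₀ : 0 ≤ f) (hg₀ : 0 ≤ g)
    (hf : Antitone f) (hg : Antitone g) (hμ : ∀ a b, μ a * μ b ≤ μ (a ⊔ b) * μ (a ⊓ b)) :
    (∑ a, μ a * f a) * ∑ a, μ a * g a ≤ (∑ a, μ a) * ∑ a, μ a * (f a * g a) :=
  fkg (α := αᵒᵈ) f g μ hμ₀ hf₀ hg₀ hf.dual_left hg.dual_left hμ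

lemma prod_sum_mul_le_sum_mul_prod_of_antitone {ι : Type*} (s : Finset ι) {μ : α → β}
    {f : ι → α → β} (hμ₀ : 0 ≤ μ) (hμ₁ : ∑ a, μ a = 1) (hf₀ : ∀ i, 0 ≤ f i)
    (hf : ∀ i, Antitone (f i)) (hμ : ∀ a b, μ a * μ b ≤ μ (a ⊔ b) * μ (a ⊓ b)) :
    ∏ i ∈ s, ∑ a, μ a * f i a ≤ ∑ a, μ a * ∏ i ∈ s, f i a := by
  induction s using Finset.cons_induction with
  | empty => simp [hμ₁]
  | cons i s hi ih =>
    have hsum₀ : 0 ≤ ∑ a, μ a * f i a := sum_nonneg fun a _ ↦ mul_nonneg (hμ₀ a) (hf₀ i a)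
    calc ∏ j ∈ s.cons i hi, ∑ a, μ a * f j a
        = (∑ a, μ a * f i a) * ∏ j ∈ s, ∑ a, μ a * f j a := prod_cons hi
      _ ≤ (∑ a, μ a * f i a) * ∑ a, μ a * ∏ j ∈ s, f j a := mul_le_mul_of_nonneg_left ih hsum₀
      _ ≤ (∑ a, μ a) * ∑ a, μ a * (f i a * ∏ j ∈ s, f j a) :=
        fkg_of_antitone hμ₀ (hf₀ i) (fun a ↦ prod_nonneg fun j _ ↦ hf₀ j a) (hf i)
          (Antitone.finsetProd (fun j _ ↦ hf j) fun j _ ↦ hf₀ j) hμ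
      _ = ∑ a, μ a * ∏ j ∈ s.cons i hi, f j a := by simp only [hμ₁, one_mul, prod_cons]

/-- Multivariate FKG inequality for decreasing non-negative functions and a
log-supermodular probability measure on a finite distributive lattice. -/
theorem stmt_8 {L : Type} [Fintype L] [DistribLattice L]
    (μ : L → ℝ) (hμ0 : ∀ a, 0 ≤ μ a) (hμ1 : ∑ a, μ a = 1)
    (hlog : ∀ a b : L, μ a * μ b ≤ μ (a ⊔ b) * μ (a ⊓ b))
    (n : ℕ) (f : Fin n → L → ℝ)
    (hf0 : ∀ i a, 0 ≤ f i a)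
    (hfdec : ∀ i, ∀ a b : L, a ≤ b → f i b ≤ f i a) :
    ∏ i, (∑ a, μ a * f i a) ≤ ∑ a, μ a * ∏ i, f i a :=
  prod_sum_mul_le_sum_mul_prod_of_antitone univ hμ0 hμ1 hf0 (fun i _ _ ↦ hfdec i _ _) hlog
end

section
/- Let V be a finite set, W ⊆ V nonempty, and let P : ({0,1}^k)^V → ℝ≥0 be log-supermodular (P(Y)P(Z) ≤ P(Y∨Z)P(Y∧Z) for pointwise-coordinatewise lattice operations). Define for u : W → {0,1}^k the marginal p(u) = ∑ { P(U) : U : V → {0,1}^k, U|_W = u }. Then p is log-supermodular on the lattice of functions W → {0,1}^k: p(y)·p(z) ≤ p(y∨z)·p(y∧z) for all y, z. -/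
/-!
The marginal of `P` is its push-forward along restriction to `W`, which is a lattice
homomorphism. For any lattice homomorphism `π`, the weights `P` cut down to the fibres
`π⁻¹ y`, `π⁻¹ z`, `π⁻¹ (y ⊓ z)`, `π⁻¹ (y ⊔ z)` satisfy the hypothesis of the Ahlswede–Daykin
four functions theorem, because `π a = y` and `π b = z` force `π (a ⊓ b) = y ⊓ z` and
`π (a ⊔ b) = y ⊔ z`; its conclusion is log-supermodularity of the push-forward.
-/

open Finset

section FiberSums

variable {α β R : Type*} [DistribLattice α] [Fintype α] [Lattice β] [DecidableEq β]
  [CommSemiring R] [LinearOrder R] [IsStrictOrderedRing R] [ExistsAddOfLE R]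

theorem LatticeHom.sum_fiber_mul_sum_fiber_le (π : LatticeHom α β) {P : α → R} (hP : 0 ≤ P)
    (hlog : ∀ a b, P a * P b ≤ P (a ⊔ b) * P (a ⊓ b)) (y z : β) :
    (∑ a with π a = y, P a) * (∑ a with π a = z, P a) ≤
      (∑ a with π a = y ⊔ z, P a) * (∑ a with π a = y ⊓ z, P a) := by
  set fiber : β → α → R := fun c a => if π a = c then P a else 0
  have fiber_nonneg (c : β) : 0 ≤ fiber c := fun a => ite_nonneg (hP a) le_rfl
  have fiber_mul_le (a b : α) :
      fiber y a * fiber z b ≤ fiber (y ⊓ z) (a ⊓ b) * fiber (y ⊔ z) (a ⊔ b) := by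
    by_cases ha : π a = y
    · by_cases hb : π b = z
      · simpa [fiber, ha, hb, mul_comm (P (a ⊓ b))] using hlog a b
      · simpa [fiber, hb] using mul_nonneg (fiber_nonneg _ (a ⊓ b)) (fiber_nonneg _ (a ⊔ b))
    · simpa [fiber, ha] using mul_nonneg (fiber_nonneg _ (a ⊓ b)) (fiber_nonneg _ (a ⊔ b))
  simp only [sum_filter]
  rw [mul_comm (∑ a, fiber (y ⊔ z) a)]
  exact four_functions_theorem_univ _ _ _ _ (fiber_nonneg y) (fiber_nonneg z)
    (fiber_nonneg (y ⊓ z)) (fiber_nonneg (y ⊔ z)) fiber_mul_le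

end FiberSums

@[simps]
def Pi.restrictLatticeHom {ι : Type*} (α : ι → Type*) [∀ i, Lattice (α i)] (p : ι → Prop) :
    LatticeHom (∀ i, α i) (∀ i : Subtype p, α i) where
  toFun f i := f i
  map_sup' _ _ := rfl
  map_inf' _ _ := rfl

open scoped Classical

theorem stmt_9_general {V : Type} [Fintype V] (k : ℕ) (W : Finset V)
    (P : (V → Fin k → Fin 2) → ℝ) (hP0 : ∀ U, 0 ≤ P U)
    (hlog : ∀ Y Z : V → Fin k → Fin 2,
      P Y * P Z ≤ P (fun v j => max (Y v j) (Z v j)) * P (fun v j => min (Y v j) (Z v j)))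
    (y z : W → Fin k → Fin 2) :
    (∑ U : V → Fin k → Fin 2, if (∀ v : W, U (v : V) = y v) then P U else 0) *
      (∑ U : V → Fin k → Fin 2, if (∀ v : W, U (v : V) = z v) then P U else 0) ≤
    (∑ U : V → Fin k → Fin 2,
        if (∀ v : W, U (v : V) = fun j => max (y v j) (z v j)) then P U else 0) *
      (∑ U : V → Fin k → Fin 2,
        if (∀ v : W, U (v : V) = fun j => min (y v j) (z v j)) then P U else 0) := by
  have := (Pi.restrictLatticeHom (fun _ : V => Fin k → Fin 2) (· ∈ W)).sum_fiber_mul_sum_fiber_le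
    hP0 hlog y z
  simpa [sum_filter, funext_iff] using this

/-- Marginalizing a log-supermodular non-negative function on `({0,1}^k)^V` to a
nonempty subset `W` of `V` preserves log-supermodularity. -/
theorem stmt_9 {V : Type} [Fintype V] (k : ℕ) (W : Finset V) (hW : W.Nonempty)
    (P : (V → Fin k → Fin 2) → ℝ) (hP0 : ∀ U, 0 ≤ P U)
    (hlog : ∀ Y Z : V → Fin k → Fin 2,
      P Y * P Z ≤ P (fun v j => max (Y v j) (Z v j)) * P (fun v j => min (Y v j) (Z v j)))
    (y z : W → Fin k → Fin 2) :
    (∑ U : V → Fin k → Fin 2, if (∀ v : W, U (v : V) = y v) then P U else 0) *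
      (∑ U : V → Fin k → Fin 2, if (∀ v : W, U (v : V) = z v) then P U else 0) ≤
    (∑ U : V → Fin k → Fin 2,
        if (∀ v : W, U (v : V) = fun j => max (y v j) (z v j)) then P U else 0) *
      (∑ U : V → Fin k → Fin 2,
        if (∀ v : W, U (v : V) = fun j => min (y v j) (z v j)) then P U else 0) :=
  stmt_9_general k W P hP0 hlog y z
end

section
/- The expected future phylogenetic diversity under the g-FOB model equals φ_X − ∑_{a=(u,v)∈A} λ_a ∏_{x∈C_v} p_x, where φ_X = ∑_a λ_a is the total tree length. -/
open scoped Classical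

/-- `leavesBelow A X v` is the set `C_v` of leaves (elements of `X`) separated from the
root by `v`, i.e. reachable from `v` along arcs of `A`. -/
noncomputable def leavesBelow {V : Type} [Fintype V] (A : Finset (V × V)) (X : Finset V)
    (v : V) : Finset V :=
  X.filter (fun x => Relation.ReflTransGen (fun r s => (r, s) ∈ A) v x)

private lemma sum_pi_bool_prod {ι : Type} [Fintype ι] [Fintype (ι → Bool)] (g : ι → Bool → ℝ) :
    ∑ ω : ι → Bool, ∏ i, g i (ω i) = ∏ i, (g i true + g i false) := by
  classical
  have huniv : (Finset.univ : Finset (ι → Bool))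
      = Fintype.piFinset (fun _ => (Finset.univ : Finset Bool)) := by
    ext ω; simp [Fintype.mem_piFinset]
  rw [huniv, ← Finset.prod_univ_sum]
  simp

/-- Under the g-FOB model (each leaf `x` extinct independently with probability `p x`;
`ω x = true` meaning `x` is extinct), the expected future phylogenetic diversity equals
`φ_X − ∑_{a=(u,v)∈A} λ_a ∏_{x∈C_v} p_x`, where `φ_X = ∑_a λ_a`. -/
theorem stmt_19 {V : Type} [Fintype V] (ρ : V) (A : Finset (V × V)) (X : Finset V)
    -- tree structure: arcs directed away from the root, `X` is the leaf set
    (hroot : ∀ a ∈ A, a.2 ≠ ρ)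
    (hparent : ∀ v : V, v ≠ ρ → ∃! r : V, (r, v) ∈ A)
    (hleaf : ∀ x ∈ X, ∀ a ∈ A, a.1 ≠ x)
    (lam : V × V → ℝ) (hlam : ∀ a ∈ A, 0 ≤ lam a)
    (p : V → ℝ) (hp : ∀ x ∈ X, p x ∈ Set.Icc (0:ℝ) 1) :
    (∑ ω : X → Bool,
        (∏ x : X, (if ω x then p x else 1 - p x)) *
          ∑ a ∈ A, lam a *
            (if ∃ x : X, (x : V) ∈ leavesBelow A X a.2 ∧ ω x = false then 1 else 0))
      = (∑ a ∈ A, lam a) - ∑ a ∈ A, lam a * ∏ x ∈ leavesBelow A X a.2, p x := by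
  classical
  -- inner sum per arc
  have key : ∀ a ∈ A,
      (∑ ω : X → Bool,
        (∏ x : X, (if ω x then p x else 1 - p x)) *
          (if ∃ x : X, (x : V) ∈ leavesBelow A X a.2 ∧ ω x = false then 1 else 0))
      = 1 - ∏ x ∈ leavesBelow A X a.2, p x := by
    intro a _
    set C := leavesBelow A X a.2 with hC
    have hsub : C ⊆ X := Finset.filter_subset _ _
    -- rewrite indicator as 1 - (all-extinct indicator)
    have hind : ∀ ω : X → Bool,
        (if ∃ x : X, (x : V) ∈ C ∧ ω x = false then (1:ℝ) else 0)
        = 1 - ∏ x : X, (if (x : V) ∈ C then (if ω x then (1:ℝ) else 0) else 1) := by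
      intro ω
      by_cases h : ∃ x : X, (x : V) ∈ C ∧ ω x = false
      · obtain ⟨x, hxC, hxf⟩ := h
        rw [if_pos ⟨x, hxC, hxf⟩, Finset.prod_eq_zero (Finset.mem_univ x)]
        · ring
        · simp [hxC, hxf]
      · rw [if_neg h]
        push_neg at h
        have : ∀ x : X, (x : V) ∈ C → ω x = true := by
          intro x hx
          have := h x hx
          simpa using this
        rw [Finset.prod_eq_one]
        · ring
        · intro x _
          by_cases hx : (x : V) ∈ C
          · simp [hx, this x hx]
          · simp [hx]
    simp only [hind, mul_sub, mul_one, Finset.sum_sub_distrib]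
    have h1 : (∑ ω : X → Bool, ∏ x : X, (if ω x then p x else 1 - p x)) = 1 := by
      have h := sum_pi_bool_prod (fun (x : X) (b : Bool) => if b then p (x : V) else 1 - p (x : V))
      simpa using h
    have h2 : (∑ ω : X → Bool,
        (∏ x : X, (if ω x then p x else 1 - p x)) *
          ∏ x : X, (if (x : V) ∈ C then (if ω x then (1:ℝ) else 0) else 1))
        = ∏ x ∈ C, p x := by
      have h := sum_pi_bool_prod (fun (x : X) (b : Bool) =>
        (if b then p (x : V) else 1 - p (x : V)) *
          (if (x : V) ∈ C then (if b then (1:ℝ) else 0) else 1))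
      calc (∑ ω : X → Bool,
            (∏ x : X, (if ω x then p x else 1 - p x)) *
              ∏ x : X, (if (x : V) ∈ C then (if ω x then (1:ℝ) else 0) else 1))
          = ∑ ω : X → Bool, ∏ x : X,
              ((if ω x then p (x : V) else 1 - p (x : V)) *
                (if (x : V) ∈ C then (if ω x then (1:ℝ) else 0) else 1)) := by
            exact Finset.sum_congr rfl fun ω _ => (Finset.prod_mul_distrib).symm
        _ = ∏ x : X, (((if true then p (x : V) else 1 - p (x : V)) *
                (if (x : V) ∈ C then (if true then (1:ℝ) else 0) else 1)) +
              ((if false then p (x : V) else 1 - p (x : V)) *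
                (if (x : V) ∈ C then (if false then (1:ℝ) else 0) else 1))) := h
        _ = ∏ x : X, (if (x : V) ∈ C then p (x : V) else 1) := by
            apply Finset.prod_congr rfl
            intro x _
            by_cases hx : (x : V) ∈ C <;> simp [hx] <;> ring
        _ = ∏ x ∈ C, p x := by
            rw [Finset.prod_coe_sort X (fun x => if x ∈ C then p x else 1), ← Finset.prod_filter]
            congr 1
            ext x
            simp only [Finset.mem_filter]
            exact ⟨fun h => h.2, fun h => ⟨hsub h, h⟩⟩
    rw [h1, h2]
  -- main computation
  simp_rw [Finset.mul_sum]
  rw [Finset.sum_comm]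
  have : ∀ a ∈ A, (∑ ω : X → Bool,
      (∏ x : X, (if ω x then p x else 1 - p x)) *
        (lam a * (if ∃ x : X, (x : V) ∈ leavesBelow A X a.2 ∧ ω x = false then 1 else 0)))
      = lam a - lam a * ∏ x ∈ leavesBelow A X a.2, p x := by
    intro a ha
    simp_rw [← mul_assoc, mul_comm _ (lam a), mul_assoc, ← Finset.mul_sum]
    rw [key a ha]
    ring
  rw [Finset.sum_congr rfl this, Finset.sum_sub_distrib]
end
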